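/- Let λ > 0, and let m, s be positive integers with s ≥ λ. Let ν be a probability distribution on ℝ with finite absolute m-th moment and write m_ℓ = ∫ x^ℓ dν(x) for ℓ ≤ m. On some probability space let B_1, …, B_s, X_1, …, X_s be mutually independent random variables, where each B_j is Bernoulli with P(B_j = 1) = λ/s and each X_j has distribution ν. Then E[ ( Σ_{j=1}^s B_j X_j )^m ] = Σ_{σ ∈ Π(m)} [ s! / ( s^{|σ|} (s − |σ|)! ) ] · λ^{|σ|} · Π_{k=1}^{|σ|} m_{|σ_k|}, where the sum runs over all partitions σ of {1, …, m} with blocks σ_1, …, σ_{|σ|}; consequently, as s → ∞ these moments converge to Σ_{σ ∈ Π(m)} λ^{|σ|} Π_{k=1}^{|σ|} m_{|σ_k|}. -/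

import Mathlib

open MeasureTheory ProbabilityTheory Real BigOperators Filter

/-- A partition of `{1, …, m}`, encoded on `Fin m` by its finset of blocks. -/
def IsPartitionFinset (m : ℕ) (P : Finset (Finset (Fin m))) : Prop :=
  (∀ b ∈ P, b.Nonempty) ∧
  (∀ b ∈ P, ∀ b' ∈ P, b ≠ b' → Disjoint b b') ∧
  (∀ i : Fin m, ∃ b ∈ P, i ∈ b)

instance (m : ℕ) (P : Finset (Finset (Fin m))) : Decidable (IsPartitionFinset m P) := by
  unfold IsPartitionFinset; infer_instance

/-!
Expanding the power, `E[(∑ⱼ Bⱼ Xⱼ)^m] = ∑_{f : Fin m → Fin s} E[∏ᵢ B_{f i} X_{f i}]`. Grouping the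
factors by the fibres of `f` and using independence, the term of `f` is the product, over the
nonempty fibres `b = f⁻¹(j)`, of `E[B_j^|b|] E[X_j^|b|] = (λ/s) m_|b|` (a `{0,1}`-valued variable
equals its positive powers). So the term depends on `f` only through the partition `P` of `Fin m`
into its fibres, and the maps with fibre partition `P` are the injections of the blocks of `P` into
`Fin s`: there are `s (s-1) ⋯ (s-|P|+1)` of them. This falling factorial is `s^|P| (1 + o(1))`,
which gives the limit.
-/

open Finset Asymptotics

section Fibers

variable {α β : Type*} [Fintype α] [DecidableEq β]

def fiber (f : α → β) (j : β) : Finset α :=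
  univ.filter (f · = j)

@[simp]
lemma mem_fiber {f : α → β} {j : β} {i : α} : i ∈ fiber f j ↔ f i = j := by
  simp [fiber]

lemma injOn_fiber (f : α → β) : Set.InjOn (fiber f) (univ.image f) := by
  intro j hj j' _ h
  obtain ⟨i, -, rfl⟩ := mem_image.mp hj
  exact mem_fiber.mp (h ▸ mem_fiber.mpr rfl)

variable [DecidableEq α]

def fibers (f : α → β) : Finset (Finset α) :=
  (univ.image f).image (fiber f)

lemma mem_fibers {f : α → β} {b : Finset α} : b ∈ fibers f ↔ ∃ i, fiber f (f i) = b := by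
  simp [fibers]

lemma eq_fiber_of_mem_fibers {f : α → β} {b : Finset α} (hb : b ∈ fibers f) {i : α}
    (hi : i ∈ b) : b = fiber f (f i) := by
  obtain ⟨i₀, rfl⟩ := mem_fibers.mp hb
  rw [mem_fiber.mp hi]

lemma prod_fibers {M : Type*} [CommMonoid M] (f : α → β) (g : Finset α → M) :
    ∏ b ∈ fibers f, g b = ∏ j ∈ univ.image f, g (fiber f j) :=
  prod_image (injOn_fiber f)

lemma prod_card_fiber_eq_prod_fibers [Fintype β] {M : Type*} [CommMonoid M] (f : α → β)
    (F : ℕ → M) (hF : F 0 = 1) :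
    ∏ j, F #(fiber f j) = ∏ b ∈ fibers f, F #b := by
  rw [prod_fibers]
  refine (prod_subset (subset_univ _) fun j _ hj => ?_).symm
  rw [show fiber f j = ∅ by ext i; simp_all, card_empty, hF]

lemma isPartitionFinset_fibers {m : ℕ} (f : Fin m → β) : IsPartitionFinset m (fibers f) := by
  refine ⟨fun b hb => ?_, fun b hb b' hb' hne => ?_,
    fun i => ⟨_, mem_fibers.mpr ⟨i, rfl⟩, mem_fiber.mpr rfl⟩⟩
  · obtain ⟨i, rfl⟩ := mem_fibers.mp hb
    exact ⟨i, mem_fiber.mpr rfl⟩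
  · refine disjoint_left.mpr fun i hi hi' => hne ?_
    rw [eq_fiber_of_mem_fibers hb hi, eq_fiber_of_mem_fibers hb' hi']

end Fibers

namespace IsPartitionFinset

variable {m : ℕ} {P : Finset (Finset (Fin m))} (hP : IsPartitionFinset m P)
include hP

lemma eq_of_mem_of_mem {b b' : Finset (Fin m)} (hb : b ∈ P) (hb' : b' ∈ P) {i : Fin m}
    (hi : i ∈ b) (hi' : i ∈ b') : b = b' := by
  by_contra hne
  exact disjoint_left.mp (hP.2.1 b hb b' hb' hne) hi hi'

noncomputable def block (i : Fin m) : P :=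
  ⟨(hP.2.2 i).choose, (hP.2.2 i).choose_spec.1⟩

lemma mem_block (i : Fin m) : i ∈ (hP.block i).1 :=
  (hP.2.2 i).choose_spec.2

lemma block_eq {b : Finset (Fin m)} (hb : b ∈ P) {i : Fin m} (hi : i ∈ b) :
    hP.block i = ⟨b, hb⟩ :=
  Subtype.ext (hP.eq_of_mem_of_mem (hP.block i).2 hb (hP.mem_block i) hi)

noncomputable def rep (b : P) : Fin m :=
  (hP.1 b.1 b.2).choose

lemma rep_mem (b : P) : hP.rep b ∈ b.1 :=
  (hP.1 b.1 b.2).choose_spec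

lemma block_rep (b : P) : hP.block (hP.rep b) = b :=
  hP.block_eq b.2 (hP.rep_mem b)

variable {β : Type*} [DecidableEq β]

lemma fiber_comp_block (e : P ↪ β) (i : Fin m) :
    fiber (e ∘ hP.block) (e (hP.block i)) = (hP.block i).1 := by
  ext i'
  simp only [mem_fiber, Function.comp_apply, e.injective.eq_iff]
  exact ⟨fun h => h ▸ hP.mem_block i', fun h => hP.block_eq (hP.block i).2 h⟩

lemma fibers_comp_block (e : P ↪ β) : fibers (e ∘ hP.block) = P := by
  ext b
  simp only [mem_fibers, Function.comp_apply, hP.fiber_comp_block]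
  exact ⟨fun ⟨i, hi⟩ => hi ▸ (hP.block i).2, fun hb => ⟨hP.rep ⟨b, hb⟩, by rw [hP.block_rep]⟩⟩

lemma apply_rep_block {f : Fin m → β} (hf : fibers f = P) (i : Fin m) :
    f (hP.rep (hP.block i)) = f i := by
  have hb : (hP.block i).1 ∈ fibers f := hf ▸ (hP.block i).2
  have h := hP.rep_mem (hP.block i)
  rwa [eq_fiber_of_mem_fibers hb (hP.mem_block i), mem_fiber] at h

lemma injective_apply_rep {f : Fin m → β} (hf : fibers f = P) :
    Function.Injective fun b : P => f (hP.rep b) := by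
  intro b b' h
  have hF : fiber f (f (hP.rep b)) ∈ P :=
    (congrArg (fiber f (f (hP.rep b)) ∈ ·) hf).mp (mem_fibers.mpr ⟨_, rfl⟩)
  rw [← hP.block_rep b, ← hP.block_rep b', hP.block_eq hF (mem_fiber.mpr rfl),
    hP.block_eq hF (mem_fiber.mpr h.symm)]

noncomputable def embeddingEquivFibersEq : (P ↪ β) ≃ {f : Fin m → β // fibers f = P} where
  toFun e := ⟨e ∘ hP.block, hP.fibers_comp_block e⟩
  invFun f := ⟨fun b => f.1 (hP.rep b), hP.injective_apply_rep f.2⟩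
  left_inv e := by ext b; simp [hP.block_rep]
  right_inv f := by ext i; simp [hP.apply_rep_block f.2]

lemma card_filter_fibers_eq [Fintype β] :
    #{f : Fin m → β | fibers f = P} = (Fintype.card β).descFactorial #P := by
  rw [← Fintype.card_subtype, ← Fintype.card_congr hP.embeddingEquivFibersEq,
    Fintype.card_embedding_eq, Fintype.card_coe]

end IsPartitionFinset

lemma sum_fibers_eq_sum_partitions {m : ℕ} {β M : Type*} [Fintype β] [DecidableEq β]
    [AddCommMonoid M] (g : Finset (Finset (Fin m)) → M) :
    ∑ f : Fin m → β, g (fibers f) =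
      ∑ P ∈ univ.filter (IsPartitionFinset m), (Fintype.card β).descFactorial #P • g P := by
  rw [← sum_fiberwise_of_maps_to (g := fibers) (t := univ.filter (IsPartitionFinset m))
    (fun f _ => mem_filter.mpr ⟨mem_univ _, isPartitionFinset_fibers f⟩)]
  refine sum_congr rfl fun P hP => ?_
  rw [sum_congr rfl fun f hf => congrArg g (mem_filter.mp hf).2, sum_const,
    (mem_filter.mp hP).2.card_filter_fibers_eq]

lemma tendsto_descFactorial_div_pow (r : ℕ) :
    Tendsto (fun s : ℕ => (s.descFactorial r : ℝ) / (s : ℝ) ^ r) atTop (nhds 1) := by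
  have hequiv : (fun x : ℝ => (descPochhammer ℝ r).eval x) ~[atTop] fun x => x ^ r := by
    simpa [(monic_descPochhammer ℝ r).leadingCoeff, descPochhammer_natDegree] using
      (descPochhammer ℝ r).isEquivalent_atTop_lead
  have hratio := (isEquivalent_iff_tendsto_one
    ((eventually_ne_atTop 0).mono fun x hx => pow_ne_zero r hx)).mp hequiv
  simpa [Function.comp_def, descPochhammer_eval_eq_descFactorial] using
    hratio.comp tendsto_natCast_atTop_atTop

lemma ProbabilityTheory.iIndepFun.integrable_fun_prod_comp {Ω ι 𝕜 : Type*} [MeasurableSpace Ω]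
    {μ : Measure Ω} [Fintype ι] [NormedCommRing 𝕜] {𝓧 : ι → Type*}
    {m𝓧 : ∀ i, MeasurableSpace (𝓧 i)} {X : (i : ι) → Ω → 𝓧 i} {f : (i : ι) → 𝓧 i → 𝕜}
    (hX : iIndepFun X μ) (mX : ∀ i, AEMeasurable (X i) μ)
    (hf : ∀ i, Integrable (f i) (μ.map (X i))) :
    Integrable (fun ω => ∏ i, f i (X i ω)) μ := by
  have := hX.isProbabilityMeasure
  have (i : ι) : IsProbabilityMeasure (μ.map (X i)) := Measure.isProbabilityMeasure_map (mX i)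
  have hpi := Integrable.fintype_prod_dep hf
  rw [← hX.map_fun_eq_pi_map mX] at hpi
  exact (integrable_map_measure hpi.1 (aemeasurable_pi_lambda _ mX)).mp hpi

lemma integrable_pow_of_le {ν : Measure ℝ} [IsFiniteMeasure ν] {k m : ℕ} (hkm : k ≤ m)
    (hmom : Integrable (fun x => |x| ^ m) ν) : Integrable (fun x => x ^ k) ν := by
  refine (integrable_norm_iff (by fun_prop)).mp ?_
  have hmom' : Integrable (fun x : ℝ => ‖x‖ ^ m) ν := by simpa only [Real.norm_eq_abs] using hmom
  simpa only [norm_pow, id] using integrable_norm_pow_of_le aestronglyMeasurable_id hkm hmom'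

noncomputable def bernoulliLaw (p : ℝ) : Measure ℝ :=
  ENNReal.ofReal (1 - p) • Measure.dirac 0 + ENNReal.ofReal p • Measure.dirac 1

lemma isProbabilityMeasure_bernoulliLaw {p : ℝ} (hp₀ : 0 ≤ p) (hp₁ : p ≤ 1) :
    IsProbabilityMeasure (bernoulliLaw p) := by
  constructor
  simp [bernoulliLaw, ← ENNReal.ofReal_add (sub_nonneg.mpr hp₁) hp₀]

lemma integrable_bernoulliLaw (p : ℝ) (f : ℝ → ℝ) : Integrable f (bernoulliLaw p) := by
  simp [bernoulliLaw, integrable_add_measure, integrable_dirac, Integrable.smul_measure]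

lemma integral_bernoulliLaw_of_map_zero {p : ℝ} (hp : 0 ≤ p) {f : ℝ → ℝ} (hf : f 0 = 0) :
    ∫ x, f x ∂bernoulliLaw p = p * f 1 := by
  have hint := integrable_bernoulliLaw p f
  rw [bernoulliLaw, integrable_add_measure] at hint
  rw [bernoulliLaw, integral_add_measure hint.1 hint.2]
  simp [hf, hp]

lemma prod_comp_eq_prod_pow_card_fiber {α ι M : Type*} [Fintype α] [Fintype ι] [DecidableEq ι]
    [CommMonoid M] (f : α → ι) (h : ι → M) : ∏ i, h (f i) = ∏ j, h j ^ #(fiber f j) := by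
  rw [← prod_fiberwise' univ f h]
  exact prod_congr rfl fun j _ => prod_const _

lemma prod_mul_comp_eq_prod_sumElim {Ω ι : Type*} [Fintype ι] [DecidableEq ι] {m : ℕ}
    (B X : ι → Ω → ℝ) (f : Fin m → ι) (ω : Ω) :
    ∏ i, B (f i) ω * X (f i) ω =
      ∏ q : ι ⊕ ι, Sum.elim B X q ω ^ #(fiber f (q.elim id id)) := by
  rw [Fintype.prod_sum_type, prod_mul_distrib, prod_comp_eq_prod_pow_card_fiber f (B · ω),
    prod_comp_eq_prod_pow_card_fiber f (X · ω)]
  rfl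

section ThinnedSum

variable {Ω ι : Type*} [MeasurableSpace Ω] {μ : Measure Ω} {B X : ι → Ω → ℝ} {p : ℝ}
  {ν : Measure ℝ} {m : ℕ}

variable (hBmeas : ∀ j, Measurable (B j)) (hXmeas : ∀ j, Measurable (X j))
include hBmeas hXmeas

lemma aemeasurable_sumElim (q : ι ⊕ ι) : AEMeasurable (Sum.elim B X q) μ := by
  cases q with
  | inl j => exact (hBmeas j).aemeasurable
  | inr j => exact (hXmeas j).aemeasurable

variable [Fintype ι] [DecidableEq ι] (hindep : iIndepFun (Sum.elim B X) μ)
  (hB : ∀ j, μ.map (B j) = bernoulliLaw p) (hX : ∀ j, μ.map (X j) = ν)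
include hindep hB hX

lemma integrable_prod_mul_comp [IsFiniteMeasure ν] (hmom : Integrable (fun x => |x| ^ m) ν)
    (f : Fin m → ι) : Integrable (fun ω => ∏ i, B (f i) ω * X (f i) ω) μ := by
  have hint (q : ι ⊕ ι) :
      Integrable (fun x => x ^ #(fiber f (q.elim id id))) (μ.map (Sum.elim B X q)) := by
    cases q with
    | inl j =>
      simp only [Sum.elim_inl, hB j]
      exact integrable_bernoulliLaw p _
    | inr j =>
      simp only [Sum.elim_inr, id_eq, hX j]
      exact integrable_pow_of_le ((card_le_univ (fiber f j)).trans_eq (Fintype.card_fin m)) hmom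
  simp_rw [prod_mul_comp_eq_prod_sumElim]
  exact hindep.integrable_fun_prod_comp (aemeasurable_sumElim hBmeas hXmeas) hint

lemma integral_prod_mul_comp [IsProbabilityMeasure ν] (hp₀ : 0 ≤ p) (hp₁ : p ≤ 1)
    (f : Fin m → ι) :
    ∫ ω, ∏ i, B (f i) ω * X (f i) ω ∂μ = ∏ b ∈ fibers f, p * ∫ x, x ^ #b ∂ν := by
  have := isProbabilityMeasure_bernoulliLaw hp₀ hp₁
  let F : ℕ → ℝ := fun k => (∫ x, x ^ k ∂bernoulliLaw p) * ∫ x, x ^ k ∂ν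
  calc ∫ ω, ∏ i, B (f i) ω * X (f i) ω ∂μ
      = ∏ q : ι ⊕ ι, ∫ ω, Sum.elim B X q ω ^ #(fiber f (q.elim id id)) ∂μ := by
        simp_rw [prod_mul_comp_eq_prod_sumElim]
        exact hindep.integral_fun_prod_comp (aemeasurable_sumElim hBmeas hXmeas)
          fun q => (continuous_pow #(fiber f (q.elim id id))).aestronglyMeasurable
    _ = ∏ j, F #(fiber f j) := by
        rw [Fintype.prod_sum_type, ← prod_mul_distrib]
        refine prod_congr rfl fun j _ => ?_
        simp only [Sum.elim_inl, Sum.elim_inr, id, F, ← hB j, ← hX j]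
        rw [integral_map (hBmeas j).aemeasurable (by fun_prop),
          integral_map (hXmeas j).aemeasurable (by fun_prop)]
    _ = ∏ b ∈ fibers f, F #b := prod_card_fiber_eq_prod_fibers f F (by simp [F])
    _ = ∏ b ∈ fibers f, p * ∫ x, x ^ #b ∂ν := by
        refine prod_congr rfl fun b hb => ?_
        have hcard : #b ≠ 0 := ((isPartitionFinset_fibers f).1 b hb).card_ne_zero
        simp only [F]
        rw [integral_bernoulliLaw_of_map_zero (f := (· ^ #b)) hp₀ (zero_pow hcard), one_pow,
          mul_one]

theorem integral_sum_mul_pow_eq_sum_partitions [IsProbabilityMeasure ν] (hp₀ : 0 ≤ p)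
    (hp₁ : p ≤ 1) (hmom : Integrable (fun x => |x| ^ m) ν) :
    ∫ ω, (∑ j, B j ω * X j ω) ^ m ∂μ =
      ∑ P ∈ univ.filter (fun P : Finset (Finset (Fin m)) => IsPartitionFinset m P),
        (Fintype.card ι).descFactorial #P * p ^ #P * ∏ b ∈ P, ∫ x, x ^ #b ∂ν := by
  simp_rw [Fintype.sum_pow]
  rw [integral_finsetSum _ fun f _ => integrable_prod_mul_comp hBmeas hXmeas hindep hB hX hmom f]
  simp_rw [integral_prod_mul_comp hBmeas hXmeas hindep hB hX hp₀ hp₁]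
  rw [sum_fibers_eq_sum_partitions fun P => ∏ b ∈ P, p * ∫ x, x ^ #b ∂ν]
  simp_rw [prod_mul_distrib, prod_const, nsmul_eq_mul, mul_assoc]

end ThinnedSum

theorem integral_sum_mul_pow_eq_descFactorial_div {Ω : Type*} [MeasurableSpace Ω]
    {μ : Measure Ω} {s m : ℕ} {B X : Fin s → Ω → ℝ} {lam : ℝ} {ν : Measure ℝ}
    [IsProbabilityMeasure ν]
    (hlam : 0 < lam) (hls : lam ≤ s) (hindep : iIndepFun (Sum.elim B X) μ)
    (hBmeas : ∀ j, Measurable (B j)) (hXmeas : ∀ j, Measurable (X j))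
    (hB : ∀ j, μ.map (B j) = bernoulliLaw (lam / s)) (hX : ∀ j, μ.map (X j) = ν)
    (hmom : Integrable (fun x => |x| ^ m) ν) :
    ∫ ω, (∑ j, B j ω * X j ω) ^ m ∂μ =
      ∑ P ∈ univ.filter (fun P : Finset (Finset (Fin m)) => IsPartitionFinset m P),
        ((s.descFactorial #P : ℝ) / (s : ℝ) ^ #P) * lam ^ #P * ∏ b ∈ P, ∫ x, x ^ #b ∂ν := by
  have hs : (0 : ℝ) < s := hlam.trans_le hls
  rw [integral_sum_mul_pow_eq_sum_partitions hBmeas hXmeas hindep hB hX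
    (div_nonneg hlam.le hs.le) ((div_le_one hs).mpr hls) hmom]
  refine sum_congr rfl fun P _ => ?_
  rw [Fintype.card_fin]
  ring

lemma tendsto_sum_descFactorial_div_pow_mul {α : Type*} (T : Finset (Finset α)) (lam : ℝ)
    (w : Finset α → ℝ) :
    Tendsto (fun s : ℕ => ∑ P ∈ T, ((s.descFactorial #P : ℝ) / (s : ℝ) ^ #P) * lam ^ #P * w P)
      atTop (nhds (∑ P ∈ T, lam ^ #P * w P)) :=
  tendsto_finsetSum _ fun P _ => by
    simpa using ((tendsto_descFactorial_div_pow #P).mul_const (lam ^ #P)).mul_const (w P)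

theorem stmt_6_general (lam : ℝ) (hlam : 0 < lam) (m : ℕ)
    (ν : Measure ℝ) [IsProbabilityMeasure ν]
    (hmom : Integrable (fun x => |x| ^ m) ν)
    (Ω : ℕ → Type) (mΩ : ∀ s, MeasurableSpace (Ω s)) (μ : ∀ s, Measure (Ω s))
    (B X : ∀ s : ℕ, Fin s → Ω s → ℝ)
    (hBmeas : ∀ s j, Measurable (B s j)) (hXmeas : ∀ s j, Measurable (X s j))
    (hindep : ∀ s : ℕ, lam ≤ (s : ℝ) →
      iIndepFun (Sum.elim (B s) (X s)) (μ s))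
    (hB : ∀ s : ℕ, lam ≤ (s : ℝ) → ∀ j, Measure.map (B s j) (μ s)
      = ENNReal.ofReal (1 - lam / s) • Measure.dirac (0 : ℝ)
        + ENNReal.ofReal (lam / s) • Measure.dirac (1 : ℝ))
    (hX : ∀ s : ℕ, lam ≤ (s : ℝ) → ∀ j, Measure.map (X s j) (μ s) = ν) :
    (∀ s : ℕ, 0 < s → lam ≤ (s : ℝ) →
      ∫ ω, (∑ j, B s j ω * X s j ω) ^ m ∂(μ s)
        = ∑ P ∈ Finset.univ.filter (fun P : Finset (Finset (Fin m)) => IsPartitionFinset m P),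
            ((s.descFactorial P.card : ℝ) / (s : ℝ) ^ P.card) * lam ^ P.card
              * ∏ b ∈ P, ∫ x, x ^ b.card ∂ν) ∧
    Tendsto (fun s : ℕ => ∫ ω, (∑ j, B s j ω * X s j ω) ^ m ∂(μ s)) atTop
      (nhds (∑ P ∈ Finset.univ.filter
          (fun P : Finset (Finset (Fin m)) => IsPartitionFinset m P),
          lam ^ P.card * ∏ b ∈ P, ∫ x, x ^ b.card ∂ν)) := by
  have hmoment := fun (s : ℕ) (_ : 0 < s) (hls : lam ≤ s) =>
    integral_sum_mul_pow_eq_descFactorial_div hlam hls (hindep s hls) (hBmeas s) (hXmeas s)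
      (hB s hls) (hX s hls) hmom
  refine ⟨hmoment, (tendsto_sum_descFactorial_div_pow_mul _ lam _).congr' ?_⟩
  filter_upwards [eventually_gt_atTop 0,
    tendsto_natCast_atTop_atTop.eventually_ge_atTop lam] with s hs hls
  exact (hmoment s hs hls).symm

/-- **Moment formula characterizing the Poisson random measure** (scalar, commutative instance
of property (iv) in Section 4 of the paper): if for each `s ≥ λ` the random variables
`B₁, …, B_s, X₁, …, X_s` are mutually independent, `B_j` Bernoulli of parameter `λ/s` and `X_j`
distributed as `ν`, then
`E[(Σ_j B_j X_j)^m] = Σ_{σ partition of {1,…,m}} s!/(s^{|σ|}(s-|σ|)!) · λ^{|σ|} · Π_k m_{|σ_k|}`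
(with `s!/(s-r)!` the falling factorial `s(s-1)⋯(s-r+1)`), and consequently as `s → ∞` these
moments converge to `Σ_{σ partition} λ^{|σ|} Π_k m_{|σ_k|}`, where `m_ℓ = ∫ x^ℓ dν`. -/
theorem stmt_6 (lam : ℝ) (hlam : 0 < lam) (m : ℕ) (hm : 0 < m)
    (ν : Measure ℝ) [IsProbabilityMeasure ν]
    (hmom : Integrable (fun x => |x| ^ m) ν)
    (Ω : ℕ → Type) (mΩ : ∀ s, MeasurableSpace (Ω s)) (μ : ∀ s, Measure (Ω s))
    (hprob : ∀ s, IsProbabilityMeasure (μ s))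
    (B X : ∀ s : ℕ, Fin s → Ω s → ℝ)
    (hBmeas : ∀ s j, Measurable (B s j)) (hXmeas : ∀ s j, Measurable (X s j))
    (hindep : ∀ s : ℕ, lam ≤ (s : ℝ) →
      iIndepFun (Sum.elim (B s) (X s)) (μ s))
    (hB : ∀ s : ℕ, lam ≤ (s : ℝ) → ∀ j, Measure.map (B s j) (μ s)
      = ENNReal.ofReal (1 - lam / s) • Measure.dirac (0 : ℝ)
        + ENNReal.ofReal (lam / s) • Measure.dirac (1 : ℝ))
    (hX : ∀ s : ℕ, lam ≤ (s : ℝ) → ∀ j, Measure.map (X s j) (μ s) = ν) :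
    (∀ s : ℕ, 0 < s → lam ≤ (s : ℝ) →
      ∫ ω, (∑ j, B s j ω * X s j ω) ^ m ∂(μ s)
        = ∑ P ∈ Finset.univ.filter (fun P : Finset (Finset (Fin m)) => IsPartitionFinset m P),
            ((s.descFactorial P.card : ℝ) / (s : ℝ) ^ P.card) * lam ^ P.card
              * ∏ b ∈ P, ∫ x, x ^ b.card ∂ν) ∧
    Tendsto (fun s : ℕ => ∫ ω, (∑ j, B s j ω * X s j ω) ^ m ∂(μ s)) atTop
      (nhds (∑ P ∈ Finset.univ.filter
          (fun P : Finset (Finset (Fin m)) => IsPartitionFinset m P),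
          lam ^ P.card * ∏ b ∈ P, ∫ x, x ^ b.card ∂ν)) :=
  stmt_6_general lam hlam m ν hmom Ω mΩ μ B X hBmeas hXmeas hindep hB hX
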